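/- arXiv:2407.04058 — 3 statements merged into one kernel-verified Lean document; each statement's English description precedes it below -/
import Mathlib

section
/- For the three-qubit GHZ state |GHZ⟩ = (|000⟩ + |111⟩)/√2, the minimum over all choices of local orthonormal measurement bases on each qubit of the Shannon entropy of the joint outcome distribution equals ln 2. -/
noncomputable section
open scoped BigOperators

/-- Shannon entropy (natural logarithm), with the convention `0 * log 0 = 0`. -/
def shannon {α : Type*} [Fintype α] (p : α → ℝ) : ℝ := -∑ y, p y * Real.log (p y)

/-- `B` lists the members of an orthonormal basis of `ℂ^d` (the rows `B a` are the basis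
vectors). -/
def ONB {d : ℕ} (B : Fin d → Fin d → ℂ) : Prop :=
  ∀ a b, (∑ i, (starRingEnd ℂ) (B a i) * B b i) = if a = b then 1 else 0

/-- Born-rule joint outcome distribution obtained by measuring each qubit of the three-qubit
pure state with amplitudes `ψ` (in the computational basis) in the local orthonormal bases
`B₁, B₂, B₃`. -/
def bornProb3 (ψ : Fin 2 → Fin 2 → Fin 2 → ℂ) (B₁ B₂ B₃ : Fin 2 → Fin 2 → ℂ)
    (y : Fin 2 × Fin 2 × Fin 2) : ℝ :=
  Complex.normSq (∑ i, ∑ j, ∑ k,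
    (starRingEnd ℂ) (B₁ y.1 i) * (starRingEnd ℂ) (B₂ y.2.1 j) *
      (starRingEnd ℂ) (B₃ y.2.2 k) * ψ i j k)

/-- Amplitudes of the three-qubit GHZ state `(|000⟩ + |111⟩)/√2`. -/
def ghz (i j k : Fin 2) : ℂ :=
  if i = j ∧ j = k then (Complex.ofReal (Real.sqrt 2))⁻¹ else 0

/-!
Every outcome probability is `|⟨b₁b₂b₃|GHZ⟩|² = |∑ᵢ ⟨b₁|i⟩⟨b₂|i⟩⟨b₃|i⟩|² / 2`, and
`|∑ᵢ ⟨b₁|i⟩⟨b₂|i⟩⟨b₃|i⟩| ≤ ∑ᵢ |⟨b₁|i⟩||⟨b₂|i⟩| ≤ 1` by AM-GM, so every probability is at most `1/2`.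
The probabilities sum to `1` because the Kronecker product of the local measurement matrices is
unitary, and a distribution whose masses are all at most `1/2` has entropy at least `ln 2`.
The computational basis attains the bound: it yields `000` and `111` with probability `1/2` each.
-/

open Complex Matrix ComplexConjugate
open scoped Kronecker

/-- Row `a` is the bra `⟨b_a|`, so `braMatrix B *ᵥ ψ` lists the amplitudes `⟨b_a|ψ⟩`. -/
def braMatrix {d : ℕ} (B : Fin d → Fin d → ℂ) : Matrix (Fin d) (Fin d) ℂ :=
  Matrix.of fun a i => conj (B a i)

theorem onb_iff_braMatrix_mem_unitaryGroup {d : ℕ} {B : Fin d → Fin d → ℂ} :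
    ONB B ↔ braMatrix B ∈ unitaryGroup (Fin d) ℂ := by
  simp [ONB, mem_unitaryGroup_iff, ← Matrix.ext_iff, braMatrix, Matrix.mul_apply, Matrix.one_apply]

def compBasis (d : ℕ) : Fin d → Fin d → ℂ := fun a => Pi.single a 1

theorem onb_compBasis (d : ℕ) : ONB (compBasis d) := by
  simp [ONB, compBasis, Pi.single_apply, eq_comm]

theorem ONB.sum_normSq {d : ℕ} {B : Fin d → Fin d → ℂ} (hB : ONB B) (a : Fin d) :
    ∑ i, normSq (B a i) = 1 := by
  exact_mod_cast (by simpa [normSq_eq_conj_mul_self] using hB a a :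
    ((∑ i, normSq (B a i) : ℝ) : ℂ) = 1)

theorem Matrix.sum_normSq_mulVec_of_mem_unitaryGroup {n : Type*} [Fintype n] [DecidableEq n]
    {U : Matrix n n ℂ} (hU : U ∈ unitaryGroup n ℂ) (v : n → ℂ) :
    ∑ i, normSq ((U *ᵥ v) i) = ∑ i, normSq (v i) := by
  have key : star (U *ᵥ v) ⬝ᵥ (U *ᵥ v) = star v ⬝ᵥ v := by
    rw [star_mulVec, ← dotProduct_mulVec, mulVec_mulVec, ← star_eq_conjTranspose,
      Unitary.star_mul_self_of_mem hU, one_mulVec]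
  apply ofReal_injective
  simpa [dotProduct, normSq_eq_conj_mul_self] using key

theorem bornProb3_eq_normSq_mulVec (ψ : Fin 2 → Fin 2 → Fin 2 → ℂ) (B₁ B₂ B₃ : Fin 2 → Fin 2 → ℂ)
    (y : Fin 2 × Fin 2 × Fin 2) :
    bornProb3 ψ B₁ B₂ B₃ y = normSq (((braMatrix B₁ ⊗ₖ (braMatrix B₂ ⊗ₖ braMatrix B₃)) *ᵥ
      fun x => ψ x.1 x.2.1 x.2.2) y) := by
  simp [bornProb3, mulVec, dotProduct, Fintype.sum_prod_type, braMatrix, mul_assoc]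

theorem sum_bornProb3 {B₁ B₂ B₃ : Fin 2 → Fin 2 → ℂ} (h₁ : ONB B₁) (h₂ : ONB B₂) (h₃ : ONB B₃)
    (ψ : Fin 2 → Fin 2 → Fin 2 → ℂ) :
    ∑ y, bornProb3 ψ B₁ B₂ B₃ y = ∑ i, ∑ j, ∑ k, normSq (ψ i j k) := by
  rw [onb_iff_braMatrix_mem_unitaryGroup] at h₁ h₂ h₃
  simp_rw [bornProb3_eq_normSq_mulVec, sum_normSq_mulVec_of_mem_unitaryGroup
    (kronecker_mem_unitary h₁ (kronecker_mem_unitary h₂ h₃)), Fintype.sum_prod_type]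

theorem sum_normSq_ghz : ∑ i, ∑ j, ∑ k, normSq (ghz i j k) = 1 := by
  norm_num [ghz, Fin.sum_univ_two]

theorem bornProb3_ghz (B₁ B₂ B₃ : Fin 2 → Fin 2 → ℂ) (y : Fin 2 × Fin 2 × Fin 2) :
    bornProb3 ghz B₁ B₂ B₃ y =
      normSq (∑ i, conj (B₁ y.1 i) * conj (B₂ y.2.1 i) * conj (B₃ y.2.2 i)) / 2 := by
  have hsum : ∑ i, ∑ j, ∑ k, conj (B₁ y.1 i) * conj (B₂ y.2.1 j) * conj (B₃ y.2.2 k) * ghz i j k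
      = (∑ i, conj (B₁ y.1 i) * conj (B₂ y.2.1 i) * conj (B₃ y.2.2 i)) * (√2 : ℂ)⁻¹ := by
    simp [ghz, Fin.sum_univ_two, add_mul]
  rw [bornProb3, hsum, normSq_mul, normSq_inv, normSq_ofReal, Real.mul_self_sqrt zero_le_two,
    div_eq_mul_inv]

theorem norm_sum_mul_mul_le_one {ι : Type*} [Fintype ι] {u v t : ι → ℂ}
    (hu : ∑ i, normSq (u i) = 1) (hv : ∑ i, normSq (v i) = 1) (ht : ∀ i, ‖t i‖ ≤ 1) :
    ‖∑ i, u i * v i * t i‖ ≤ 1 := by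
  calc ‖∑ i, u i * v i * t i‖ ≤ ∑ i, ‖u i‖ * ‖v i‖ := by
        refine (norm_sum_le _ _).trans (Finset.sum_le_sum fun i _ => ?_)
        rw [norm_mul, norm_mul]
        exact mul_le_of_le_one_right (by positivity) (ht i)
    _ ≤ ∑ i, (normSq (u i) + normSq (v i)) / 2 := by
        refine Finset.sum_le_sum fun i _ => ?_
        rw [← Complex.sq_norm, ← Complex.sq_norm]
        nlinarith [sq_nonneg (‖u i‖ - ‖v i‖)]
    _ = 1 := by rw [← Finset.sum_div, Finset.sum_add_distrib, hu, hv]; norm_num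

theorem bornProb3_ghz_le_half {B₁ B₂ B₃ : Fin 2 → Fin 2 → ℂ} (h₁ : ONB B₁) (h₂ : ONB B₂)
    (h₃ : ONB B₃) (y : Fin 2 × Fin 2 × Fin 2) : bornProb3 ghz B₁ B₂ B₃ y ≤ 1 / 2 := by
  have hbound := norm_sum_mul_mul_le_one (u := fun i => conj (B₁ y.1 i))
    (v := fun i => conj (B₂ y.2.1 i)) (t := fun i => conj (B₃ y.2.2 i))
    (by simpa using h₁.sum_normSq y.1) (by simpa using h₂.sum_normSq y.2.1)
    (entry_norm_bound_of_unitary (onb_iff_braMatrix_mem_unitaryGroup.mp h₃) y.2.2)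
  rw [bornProb3_ghz, ← Complex.sq_norm]
  gcongr
  exact pow_le_one₀ (norm_nonneg _) hbound

theorem neg_log_le_shannon {α : Type*} [Fintype α] {p : α → ℝ} {c : ℝ} (hp : ∀ y, 0 ≤ p y)
    (hc : ∀ y, p y ≤ c) (hsum : ∑ y, p y = 1) : -Real.log c ≤ shannon p := by
  have hterm : ∀ y, p y * -Real.log c ≤ -(p y * Real.log (p y)) := fun y => by
    rcases (hp y).eq_or_lt with h | h
    · simp [← h]
    · nlinarith [Real.log_le_log h (hc y)]
  calc -Real.log c = ∑ y, p y * -Real.log c := by rw [← Finset.sum_mul, hsum, one_mul]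
    _ ≤ ∑ y, -(p y * Real.log (p y)) := Finset.sum_le_sum fun y _ => hterm y
    _ = shannon p := by rw [shannon, Finset.sum_neg_distrib]

theorem shannon_bornProb3_ghz_compBasis :
    shannon (bornProb3 ghz (compBasis 2) (compBasis 2) (compBasis 2)) = Real.log 2 := by
  simp only [shannon, bornProb3_ghz, Fintype.sum_prod_type, Fin.sum_univ_two, compBasis,
    Pi.single_apply]
  norm_num
  rw [one_div, Real.log_inv]
  ring

/-- For the GHZ state, the minimum over all choices of local orthonormal measurement bases of
the Shannon entropy of the joint outcome distribution equals `ln 2`. -/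
theorem ghz_min_outcome_entropy :
    sInf {h : ℝ | ∃ B₁ B₂ B₃ : Fin 2 → Fin 2 → ℂ, ONB B₁ ∧ ONB B₂ ∧ ONB B₃ ∧
      h = shannon (bornProb3 ghz B₁ B₂ B₃)} = Real.log 2 := by
  refine IsLeast.csInf_eq ⟨⟨_, _, _, onb_compBasis 2, onb_compBasis 2, onb_compBasis 2,
    shannon_bornProb3_ghz_compBasis.symm⟩, ?_⟩
  rintro _ ⟨B₁, B₂, B₃, h₁, h₂, h₃, rfl⟩
  have hsum : ∑ y, bornProb3 ghz B₁ B₂ B₃ y = 1 := by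
    rw [sum_bornProb3 h₁ h₂ h₃, sum_normSq_ghz]
  have hbound := neg_log_le_shannon (fun y => normSq_nonneg _) (bornProb3_ghz_le_half h₁ h₂ h₃) hsum
  rwa [one_div, Real.log_inv, neg_neg] at hbound
end
end

section
/- The two expressions for the multipartite work deficit coincide: min over non-adaptive local projective measurement protocols Λ of H_Λ(Y_N) - S(ρ) equals min over classically correlated states σ of the quantum relative entropy S(ρ‖σ), where classically correlated states are those of the form σ = ∑_{Y_N} q(Y_N) Π_{y₁} ⊗ ⋯ ⊗ Π_{y_N} with orthogonal rank-one projectors {Π_{y_n}} for each party. -/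
noncomputable section
open scoped BigOperators ComplexOrder

/-- Von Neumann entropy (natural logarithm) of a Hermitian matrix, defined through its
eigenvalues; junk value `0` on non-Hermitian input. -/
def vN {n : Type*} [Fintype n] [DecidableEq n] (ρ : Matrix n n ℂ) : ℝ :=
  if h : ρ.IsHermitian then -∑ i, h.eigenvalues i * Real.log (h.eigenvalues i) else 0

/-- `ρ` is a density matrix. -/
def IsDensity {n : Type*} [Fintype n] [DecidableEq n] (ρ : Matrix n n ℂ) : Prop :=
  ρ.PosSemidef ∧ ρ.trace = 1

/-- Born-rule joint outcome distribution of the non-adaptive local rank-one projective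
measurement with per-party orthonormal bases `B n`, applied to the `N`-party state `ρ`
(each party being `d`-dimensional): `P(Y) = Tr[(Π_{y₁} ⊗ ⋯ ⊗ Π_{y_N}) ρ]`. -/
def locProb {N d : ℕ} (ρ : Matrix (Fin N → Fin d) (Fin N → Fin d) ℂ)
    (B : Fin N → Fin d → Fin d → ℂ) (y : Fin N → Fin d) : ℝ :=
  (∑ s, ∑ t, (∏ n, B n (y n) (s n) * (starRingEnd ℂ) (B n (y n) (t n))) * ρ t s).re

/-- The multipartite (zero-way) work deficit
`Δ(ρ) = min_{Λ ∈ M_N} H_Λ(Y_N) − S(ρ)`. -/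
def deficit {N d : ℕ} (ρ : Matrix (Fin N → Fin d) (Fin N → Fin d) ℂ) : ℝ :=
  sInf {h : ℝ | ∃ B : Fin N → Fin d → Fin d → ℂ,
    (∀ n, ONB (B n)) ∧ h = shannon (locProb ρ B)} - vN ρ
/-- Matrix logarithm of a Hermitian matrix through its spectral decomposition, with the
convention `log 0 = 0` on the kernel; junk value `0` on non-Hermitian input. -/
def mlog {n : Type*} [Fintype n] [DecidableEq n] (A : Matrix n n ℂ) : Matrix n n ℂ :=
  if h : A.IsHermitian then
    (h.eigenvectorUnitary : Matrix n n ℂ) *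
      Matrix.diagonal (fun i => Complex.ofReal (Real.log (h.eigenvalues i))) *
      (star (h.eigenvectorUnitary : Matrix n n ℂ))
  else 0

/-- Quantum relative entropy `S(ρ‖σ) = Tr[ρ (ln ρ − ln σ)]` (natural logarithm). -/
def relEnt {n : Type*} [Fintype n] [DecidableEq n] (ρ σ : Matrix n n ℂ) : ℝ :=
  ((ρ * (mlog ρ - mlog σ)).trace).re

/-- `σ` is a (full-support) classically correlated state of the `N`-party system:
`σ = ∑_{Y_N} q(Y_N) Π_{y₁} ⊗ ⋯ ⊗ Π_{y_N}` for some per-party orthonormal bases and a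
probability distribution `q`. -/
def ClassCorr {N d : ℕ} (σ : Matrix (Fin N → Fin d) (Fin N → Fin d) ℂ) : Prop :=
  ∃ (B : Fin N → Fin d → Fin d → ℂ) (q : (Fin N → Fin d) → ℝ),
    (∀ n, ONB (B n)) ∧ (∀ Y, 0 < q Y) ∧ (∑ Y, q Y = 1) ∧
    ∀ s t, σ s t = ∑ Y, (Complex.ofReal (q Y)) *
      (∏ n, B n (Y n) (s n)) * (∏ n, (starRingEnd ℂ) (B n (Y n) (t n)))

/-!
A classically correlated state is `σ = U diag(q) U*` with `U` the product basis of a local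
measurement `B`. For such `σ` the relative entropy splits as `S(ρ‖σ) = H(P_B, q) − S(ρ)`, where
`P_B` is the outcome distribution of `B` on `ρ` (the diagonal of `U* ρ U`) and `H(P_B, q)` is the
cross entropy. By Gibbs' inequality `H(P_B, q) ≥ H(P_B)`, and mixing `P_B` with a little of the
uniform distribution gives full-support `q` with `H(P_B, q)` arbitrarily close to `H(P_B)`. So
minimising first over `q` and then over `B` turns `min_σ S(ρ‖σ)` into `min_B H(P_B) − S(ρ)`.
-/

open Matrix

section Entropy

variable {α : Type*} [Fintype α]

def crossEntropy (p q : α → ℝ) : ℝ := -∑ y, p y * Real.log (q y)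

lemma shannon_nonneg {p : α → ℝ} (hp : p ∈ stdSimplex ℝ α) : 0 ≤ shannon p := by
  have h : shannon p = ∑ y, Real.negMulLog (p y) := by
    simp [shannon, Real.negMulLog, Finset.sum_neg_distrib]
  rw [h]
  exact Finset.sum_nonneg fun y _ =>
    Real.negMulLog_nonneg (mem_Icc_of_mem_stdSimplex hp y).1 (mem_Icc_of_mem_stdSimplex hp y).2

lemma shannon_le_crossEntropy {p q : α → ℝ} (hp : p ∈ stdSimplex ℝ α) (hq_pos : ∀ y, 0 < q y)
    (hq_sum : ∑ y, q y = 1) : shannon p ≤ crossEntropy p q := by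
  have hterm : ∀ y, p y * Real.log (q y) - p y * Real.log (p y) ≤ q y - p y := by
    intro y
    rcases (hp.1 y).eq_or_lt with h | h
    · simp [← h, (hq_pos y).le]
    · have hlog := Real.log_le_sub_one_of_pos (div_pos (hq_pos y) h)
      rw [Real.log_div (hq_pos y).ne' h.ne'] at hlog
      have hcancel : p y * (q y / p y - 1) = q y - p y := by field_simp
      linarith [mul_le_mul_of_nonneg_left hlog h.le]
  have hsum := Finset.sum_le_sum fun y (_ : y ∈ Finset.univ) => hterm y
  rw [Finset.sum_sub_distrib, Finset.sum_sub_distrib, hq_sum, hp.2, sub_self] at hsum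
  rw [shannon, crossEntropy]
  linarith

lemma exists_crossEntropy_le_shannon_add {p : α → ℝ} (hp : p ∈ stdSimplex ℝ α) {δ : ℝ}
    (hδ : 0 < δ) :
    ∃ q : α → ℝ, ((∀ y, 0 < q y) ∧ ∑ y, q y = 1) ∧ crossEntropy p q ≤ shannon p + δ := by
  have hk : 0 < (Fintype.card α : ℝ) := by
    obtain ⟨y, -⟩ := Finset.exists_ne_zero_of_sum_ne_zero (by rw [hp.2]; exact one_ne_zero)
    exact Nat.cast_pos.2 (Fintype.card_pos_iff.2 ⟨y⟩)
  -- mixing in the uniform distribution with weight `1 - t` lowers each `log p y` by at most `δ`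
  set t := Real.exp (-δ)
  have ht : 0 < t := Real.exp_pos _
  have ht1 : t < 1 := Real.exp_lt_one_iff.2 (neg_neg_of_pos hδ)
  set q : α → ℝ := fun y => t * p y + (1 - t) / Fintype.card α
  have hq_pos : ∀ y, 0 < q y := fun y =>
    add_pos_of_nonneg_of_pos (mul_nonneg ht.le (hp.1 y)) (div_pos (by linarith) hk)
  have hq_sum : ∑ y, q y = 1 := by
    simp only [q, Finset.sum_add_distrib, ← Finset.mul_sum, hp.2, Finset.sum_const,
      Finset.card_univ, nsmul_eq_mul]
    field_simp
    ring
  refine ⟨q, ⟨hq_pos, hq_sum⟩, ?_⟩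
  have hterm : ∀ y, p y * (-δ + Real.log (p y)) ≤ p y * Real.log (q y) := by
    intro y
    rcases (hp.1 y).eq_or_lt with h | h
    · simp [← h]
    · refine mul_le_mul_of_nonneg_left ?_ h.le
      rw [← Real.log_exp (-δ), ← Real.log_mul ht.ne' h.ne']
      exact Real.log_le_log (by positivity) (le_add_of_nonneg_right (div_pos (by linarith) hk).le)
  have hsum := Finset.sum_le_sum fun y (_ : y ∈ Finset.univ) => hterm y
  simp only [mul_add, Finset.sum_add_distrib, ← Finset.sum_mul, hp.2] at hsum
  rw [shannon, crossEntropy]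
  linarith

lemma isGLB_crossEntropy {p : α → ℝ} (hp : p ∈ stdSimplex ℝ α) :
    IsGLB (crossEntropy p '' {q | (∀ y, 0 < q y) ∧ ∑ y, q y = 1}) (shannon p) := by
  refine ⟨?_, fun b hb => le_of_forall_pos_le_add fun δ hδ => ?_⟩
  · rintro - ⟨q, ⟨hq_pos, hq_sum⟩, rfl⟩
    exact shannon_le_crossEntropy hp hq_pos hq_sum
  · obtain ⟨q, hq, hle⟩ := exists_crossEntropy_le_shannon_add hp hδ
    exact (hb ⟨q, hq, rfl⟩).trans hle

end Entropy

lemma isGLB_image2_of_isGLB {ι κ β : Type*} [Preorder β] {f : ι → κ → β} {g : ι → β}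
    {s : Set ι} {t : Set κ} {a : β} (hg : ∀ i ∈ s, IsGLB (f i '' t) (g i))
    (ha : IsGLB (g '' s) a) : IsGLB (Set.image2 f s t) a := by
  refine ⟨?_, fun b hb => ha.2 ?_⟩
  · rintro - ⟨i, hi, k, hk, rfl⟩
    exact (ha.1 ⟨i, hi, rfl⟩).trans ((hg i hi).1 ⟨k, hk, rfl⟩)
  · rintro - ⟨i, hi, rfl⟩
    exact (hg i hi).2 fun x ⟨k, hk, hx⟩ => hx ▸ hb ⟨i, hi, k, hk, rfl⟩

namespace Matrix

variable {n : Type*} [DecidableEq n]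

lemma isSelfAdjoint_diagonal_ofReal (r : n → ℝ) :
    IsSelfAdjoint (diagonal (fun i => (r i : ℂ))) :=
  isHermitian_diagonal_of_self_adjoint _ (by ext i; simp)

variable [Fintype n]

open Polynomial in
lemma aeval_diagonal {R A : Type*} [CommSemiring R] [CommSemiring A] [Algebra R A]
    (v : n → A) (p : R[X]) : aeval (diagonal v) p = diagonal (fun i => aeval (v i) p) := by
  rw [← diagonalAlgHom_apply (R := R), aeval_algHom_apply, aeval_pi]
  rfl

lemma spectrum_real_diagonal (r : n → ℝ) :
    spectrum ℝ (diagonal (fun i => (r i : ℂ))) = Set.range r := by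
  rw [← spectrum.preimage_algebraMap ℂ, spectrum_diagonal]
  ext x
  simp [Complex.ofReal_inj]

lemma cfc_diagonal (f : ℝ → ℝ) (r : n → ℝ) :
    cfc f (diagonal (fun i => (r i : ℂ))) = diagonal (fun i => (f (r i) : ℂ)) := by
  -- on the finite spectrum, `f` agrees with its Lagrange interpolation polynomial
  set p := Lagrange.interpolate (Finset.univ.image r) id f
  have hp : ∀ i, p.eval (r i) = f (r i) := fun i =>
    Lagrange.eval_interpolate_at_node f (Set.injOn_id _)
      (Finset.mem_image_of_mem r (Finset.mem_univ i))
  have hfp : Set.EqOn f (fun x => p.eval x) (spectrum ℝ (diagonal (fun i => (r i : ℂ)))) := by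
    rw [spectrum_real_diagonal]
    rintro - ⟨i, rfl⟩
    exact (hp i).symm
  rw [cfc_congr hfp, cfc_polynomial p _ (isSelfAdjoint_diagonal_ofReal r), aeval_diagonal]
  congr 1
  funext i
  rw [← Complex.coe_algebraMap, Polynomial.aeval_algebraMap_apply_eq_algebraMap_eval, hp]

lemma cfc_unitary_conj_diagonal (U : unitaryGroup n ℂ) (f : ℝ → ℝ) (r : n → ℝ) :
    cfc f ((U : Matrix n n ℂ) * diagonal (fun i => (r i : ℂ)) * star (U : Matrix n n ℂ)) =
      U * diagonal (fun i => (f (r i) : ℂ)) * star (U : Matrix n n ℂ) := by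
  have hD := isSelfAdjoint_diagonal_ofReal r
  have hcont : Continuous (Unitary.conjStarAlgAut ℂ (Matrix n n ℂ) U) := by
    change Continuous fun A : Matrix n n ℂ => (U : Matrix n n ℂ) * A * star (U : Matrix n n ℂ)
    fun_prop
  have := StarAlgHomClass.map_cfc (S := ℂ) (Unitary.conjStarAlgAut ℂ (Matrix n n ℂ) U) f _
    (finite_real_spectrum.continuousOn _) hcont hD (hD.conjugate _)
  simpa [cfc_diagonal] using this.symm

lemma trace_mul_unitary_conj_diagonal (U : unitaryGroup n ℂ) (M : Matrix n n ℂ) (ℓ : n → ℂ) :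
    (M * (U * diagonal ℓ * star (U : Matrix n n ℂ))).trace =
      ∑ j, (star (U : Matrix n n ℂ) * M * U) j j * ℓ j := by
  rw [← Matrix.mul_assoc, trace_mul_cycle, ← Matrix.mul_assoc, trace]
  simp [mul_diagonal]

lemma re_diag_unitary_conj_mem_stdSimplex {ρ : Matrix n n ℂ} (hρ : IsDensity ρ)
    (U : unitaryGroup n ℂ) :
    (fun j => ((star (U : Matrix n n ℂ) * ρ * U) j j).re) ∈ stdSimplex ℝ n := by
  refine ⟨fun j => ?_, ?_⟩
  · have := (hρ.1.conjTranspose_mul_mul_same (U : Matrix n n ℂ)).diag_nonneg (i := j)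
    exact (Complex.nonneg_iff.1 this).1
  · rw [← Complex.re_sum]
    change (trace (star (U : Matrix n n ℂ) * ρ * (U : Matrix n n ℂ))).re = 1
    rw [trace_mul_cycle, mem_unitaryGroup_iff.1 U.2, one_mul, hρ.2, Complex.one_re]

end Matrix

section RelativeEntropy

variable {n : Type*} [Fintype n] [DecidableEq n]

lemma mlog_eq_cfc {A : Matrix n n ℂ} (hA : A.IsHermitian) : mlog A = cfc Real.log A := by
  rw [hA.cfc_eq, IsHermitian.cfc, mlog, dif_pos hA, Unitary.conjStarAlgAut_apply]
  rfl

lemma mlog_unitary_conj_diagonal (U : unitaryGroup n ℂ) (r : n → ℝ) :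
    mlog ((U : Matrix n n ℂ) * diagonal (fun i => (r i : ℂ)) * star (U : Matrix n n ℂ)) =
      U * diagonal (fun i => (Real.log (r i) : ℂ)) * star (U : Matrix n n ℂ) := by
  rw [mlog_eq_cfc, cfc_unitary_conj_diagonal]
  exact isSelfAdjoint_diagonal_ofReal r |>.conjugate _

lemma re_trace_mul_mlog_self {A : Matrix n n ℂ} (hA : A.IsHermitian) :
    (A * mlog A).trace.re = -vN A := by
  have hdiag : star (hA.eigenvectorUnitary : Matrix n n ℂ) * A * hA.eigenvectorUnitary =
      diagonal (fun i => (hA.eigenvalues i : ℂ)) := by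
    simpa [Function.comp_def] using hA.conjStarAlgAut_star_eigenvectorUnitary
  rw [mlog, dif_pos hA, trace_mul_unitary_conj_diagonal, hdiag, vN, dif_pos hA, neg_neg,
    Complex.re_sum]
  simp [← Complex.ofReal_mul]

/-- The Pythagorean decomposition `S(ρ‖σ) = S(ρ‖𝒟_σ(ρ)) + S(𝒟_σ(ρ)‖σ)` for `σ` diagonal in the
basis `U`, with the two terms summed: the dephased state `𝒟_σ(ρ)` is the diagonal of `U* ρ U`. -/
lemma relEnt_unitary_conj_diagonal {ρ : Matrix n n ℂ} (hρ : ρ.IsHermitian) (U : unitaryGroup n ℂ)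
    (q : n → ℝ) :
    relEnt ρ (U * diagonal (fun i => (q i : ℂ)) * star (U : Matrix n n ℂ)) =
      crossEntropy (fun j => ((star (U : Matrix n n ℂ) * ρ * U) j j).re) q - vN ρ := by
  rw [relEnt, mul_sub, trace_sub, Complex.sub_re, re_trace_mul_mlog_self hρ,
    mlog_unitary_conj_diagonal, trace_mul_unitary_conj_diagonal, Complex.re_sum, crossEntropy]
  simp only [Complex.mul_re, Complex.ofReal_re, Complex.ofReal_im, mul_zero, sub_zero]
  ring

end RelativeEntropy

section ProductBasis

variable {N d : ℕ}

def prodBasis (B : Fin N → Fin d → Fin d → ℂ) : Matrix (Fin N → Fin d) (Fin N → Fin d) ℂ :=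
  of fun s Y => ∏ n, B n (Y n) (s n)

lemma prodBasis_mem_unitaryGroup {B : Fin N → Fin d → Fin d → ℂ} (hB : ∀ n, ONB (B n)) :
    prodBasis B ∈ unitaryGroup (Fin N → Fin d) ℂ := by
  rw [mem_unitaryGroup_iff']
  ext Y Y'
  have h := Fintype.prod_sum (fun n i => (starRingEnd ℂ) (B n (Y n) i) * B n (Y' n) i)
  simp only [hB _ _ _, Finset.prod_boole] at h
  simp [mul_apply, prodBasis, ← Finset.prod_mul_distrib, ← h, one_apply, funext_iff]

lemma locProb_eq_re_diag (ρ : Matrix (Fin N → Fin d) (Fin N → Fin d) ℂ)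
    (B : Fin N → Fin d → Fin d → ℂ) (Y : Fin N → Fin d) :
    locProb ρ B Y = ((star (prodBasis B) * ρ * prodBasis B) Y Y).re := by
  simp only [locProb, mul_apply, star_apply, prodBasis, of_apply, Finset.prod_mul_distrib,
    Finset.sum_mul, map_prod, RCLike.star_def]
  congr 1
  refine Finset.sum_congr rfl fun s _ => Finset.sum_congr rfl fun t _ => ?_
  ring

lemma locProb_mem_stdSimplex {ρ : Matrix (Fin N → Fin d) (Fin N → Fin d) ℂ} (hρ : IsDensity ρ)
    {B : Fin N → Fin d → Fin d → ℂ} (hB : ∀ n, ONB (B n)) :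
    locProb ρ B ∈ stdSimplex ℝ (Fin N → Fin d) := by
  simpa only [← locProb_eq_re_diag] using
    re_diag_unitary_conj_mem_stdSimplex hρ ⟨_, prodBasis_mem_unitaryGroup hB⟩

lemma classCorr_iff {σ : Matrix (Fin N → Fin d) (Fin N → Fin d) ℂ} :
    ClassCorr σ ↔ ∃ B : Fin N → Fin d → Fin d → ℂ, ∃ q : (Fin N → Fin d) → ℝ,
      (∀ n, ONB (B n)) ∧ ((∀ Y, 0 < q Y) ∧ ∑ Y, q Y = 1) ∧
      σ = prodBasis B * diagonal (fun Y => (q Y : ℂ)) * star (prodBasis B) := by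
  have h : ∀ (B : Fin N → Fin d → Fin d → ℂ) (q : (Fin N → Fin d) → ℝ),
      (∀ s t, σ s t = ∑ Y, (q Y : ℂ) * (∏ n, B n (Y n) (s n)) *
        ∏ n, (starRingEnd ℂ) (B n (Y n) (t n))) ↔
      σ = prodBasis B * diagonal (fun Y => (q Y : ℂ)) * star (prodBasis B) := by
    intro B q
    rw [← Matrix.ext_iff]
    refine forall_congr' fun s => forall_congr' fun t => Eq.congr_right ?_
    rw [mul_apply]
    simp only [mul_diagonal, star_apply, prodBasis, of_apply, map_prod, RCLike.star_def]
    refine Finset.sum_congr rfl fun Y _ => ?_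
    ring
  simp only [ClassCorr, h, and_assoc]

lemma relEnt_prodBasis_conj_diagonal {ρ : Matrix (Fin N → Fin d) (Fin N → Fin d) ℂ}
    (hρ : ρ.IsHermitian) {B : Fin N → Fin d → Fin d → ℂ} (hB : ∀ n, ONB (B n))
    (q : (Fin N → Fin d) → ℝ) :
    relEnt ρ (prodBasis B * diagonal (fun Y => (q Y : ℂ)) * star (prodBasis B)) =
      crossEntropy (locProb ρ B) q - vN ρ := by
  simpa only [← locProb_eq_re_diag] using
    relEnt_unitary_conj_diagonal hρ ⟨_, prodBasis_mem_unitaryGroup hB⟩ q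

lemma relEnt_classCorr_eq_image2 {ρ : Matrix (Fin N → Fin d) (Fin N → Fin d) ℂ}
    (hρ : ρ.IsHermitian) :
    {x : ℝ | ∃ σ, ClassCorr σ ∧ x = relEnt ρ σ} =
      (· - vN ρ) '' Set.image2 (fun B q => crossEntropy (locProb ρ B) q)
        {B | ∀ n, ONB (B n)} {q | (∀ Y, 0 < q Y) ∧ ∑ Y, q Y = 1} := by
  ext x
  simp only [classCorr_iff, Set.mem_image, Set.mem_image2]
  constructor
  · rintro ⟨-, ⟨B, q, hB, hq, rfl⟩, rfl⟩
    exact ⟨_, ⟨B, hB, q, hq, rfl⟩, (relEnt_prodBasis_conj_diagonal hρ hB q).symm⟩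
  · rintro ⟨-, ⟨B, hB, q, hq, rfl⟩, rfl⟩
    exact ⟨_, ⟨B, q, hB, hq, rfl⟩, (relEnt_prodBasis_conj_diagonal hρ hB q).symm⟩

end ProductBasis

/-- The two expressions for the multipartite work deficit coincide:
`min_{Λ ∈ M_N} H_Λ(Y_N) − S(ρ) = min_{σ ∈ C_N} S(ρ‖σ)`. -/
theorem deficit_eq_min_relEnt {N d : ℕ}
    (ρ : Matrix (Fin N → Fin d) (Fin N → Fin d) ℂ) (hρ : IsDensity ρ) :
    sInf {h : ℝ | ∃ B : Fin N → Fin d → Fin d → ℂ,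
        (∀ n, ONB (B n)) ∧ h = shannon (locProb ρ B)} - vN ρ
      = sInf {x : ℝ | ∃ σ, ClassCorr σ ∧ x = relEnt ρ σ} := by
  set bases := {B : Fin N → Fin d → Fin d → ℂ | ∀ n, ONB (B n)}
  have hmeasure : {h : ℝ | ∃ B : Fin N → Fin d → Fin d → ℂ,
      (∀ n, ONB (B n)) ∧ h = shannon (locProb ρ B)} = (fun B => shannon (locProb ρ B)) '' bases := by
    ext
    simp [bases, eq_comm]
  have hbases : bases.Nonempty :=
    ⟨fun _ => (1 : Matrix (Fin d) (Fin d) ℂ), fun _ a b => by simp [one_apply]⟩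
  have hshannon : IsGLB ((fun B => shannon (locProb ρ B)) '' bases)
      (sInf ((fun B => shannon (locProb ρ B)) '' bases)) :=
    isGLB_csInf (hbases.image _)
      ⟨0, by rintro - ⟨B, hB, rfl⟩; exact shannon_nonneg (locProb_mem_stdSimplex hρ hB)⟩
  have hglb := (OrderIso.subRight (vN ρ)).isGLB_image'.2 <|
    isGLB_image2_of_isGLB (fun B hB => isGLB_crossEntropy (locProb_mem_stdSimplex hρ hB)) hshannon
  rw [hmeasure, relEnt_classCorr_eq_image2 hρ.1.1]
  exact (hglb.csInf_eq hglb.nonempty).symm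
end
end

section
/- The work deficit density of an N-partite state satisfies L_l ≤ δ ≤ U_l for every segment length l dividing N. -/
noncomputable section
open scoped BigOperators ComplexOrder

/-- The `l`-site segment of parties starting at position `m*l`
(parties `n` with `m*l ≤ n < m*l + l`). -/
def seg (N m l : ℕ) : Finset (Fin N) :=
  Finset.univ.filter (fun i => m * l ≤ i.val ∧ i.val < m * l + l)

/-- Born-rule probability of the outcome `y` when the parties in `A` are measured in the local
orthonormal bases `B n` (and nothing is done to the other parties):
`p(y) = Tr[(⊗_{n ∈ A} Π_{y_n} ⊗ 1) ρ]`.  Only the values of `y` on `A` matter. -/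
def segProb {N d : ℕ} (ρ : Matrix (Fin N → Fin d) (Fin N → Fin d) ℂ)
    (A : Finset (Fin N)) (B : Fin N → Fin d → Fin d → ℂ) (y : Fin N → Fin d) : ℝ :=
  (∑ s, ∑ t, (∏ n, if n ∈ A then B n (y n) (s n) * (starRingEnd ℂ) (B n (y n) (t n))
      else if s n = t n then (1 : ℂ) else 0) * ρ t s).re

/-- The outcome distribution of measuring the parties in `A`, recorded as a distribution over
all outcome functions by pinning the outcomes outside `A` to `0`. -/
def segDist {N d : ℕ} [NeZero d] (ρ : Matrix (Fin N → Fin d) (Fin N → Fin d) ℂ)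
    (A : Finset (Fin N)) (B : Fin N → Fin d → Fin d → ℂ) (y : Fin N → Fin d) : ℝ :=
  if ∀ n, n ∉ A → y n = 0 then segProb ρ A B y else 0

/-- The upper bound `U_l = (1/N){∑_{n ∈ I_l} min_{Λ ∈ M_{n:l}} H_Λ(Y_{n:l}) − S(ρ)}` for the
work deficit density. -/
def Ubound {N d : ℕ} [NeZero d] (ρ : Matrix (Fin N → Fin d) (Fin N → Fin d) ℂ)
    (l : ℕ) : ℝ :=
  (1 / (N : ℝ)) * ((∑ m ∈ Finset.range (N / l),
    sInf {h : ℝ | ∃ B : Fin N → Fin d → Fin d → ℂ,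
      (∀ n, ONB (B n)) ∧ h = shannon (segDist ρ (seg N m l) B)}) - vN ρ)

/-- `E` is a POVM: positive semidefinite operators summing to the identity. -/
def IsPOVM {ι α : Type*} [Fintype ι] [Fintype α] [DecidableEq α]
    (E : ι → Matrix α α ℂ) : Prop :=
  (∀ z, (E z).PosSemidef) ∧ (∑ z, E z) = 1

/-- Joint Born-rule probability of outcomes `(z, y)` for a protocol in `N_{n:l}`: an arbitrary
POVM `E` (with outcome `z`) on the prefix parties `{a_i : i < m*l}` together with local
rank-one projective measurements `B` on the segment parties `{a_i : m*l ≤ i < m*l + l}`. -/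
def prefSegProb {N d : ℕ} (ρ : Matrix (Fin N → Fin d) (Fin N → Fin d) ℂ) (m l : ℕ)
    {Z : Type} [Fintype Z]
    (E : Z → Matrix (Fin (min (m * l) N) → Fin d) (Fin (min (m * l) N) → Fin d) ℂ)
    (B : Fin N → Fin d → Fin d → ℂ) (z : Z) (y : Fin N → Fin d) : ℝ :=
  (∑ s, ∑ t, E z (fun i => s (Fin.castLE (Nat.min_le_right _ _) i))
      (fun i => t (Fin.castLE (Nat.min_le_right _ _) i)) *
      (∏ n, if n ∈ seg N m l then B n (y n) (s n) * (starRingEnd ℂ) (B n (y n) (t n))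
        else if n.val < m * l then (1 : ℂ) else if s n = t n then (1 : ℂ) else 0) * ρ t s).re

/-- Joint outcome distribution of a protocol in `N_{n:l}`, with segment-external projective
outcomes pinned to `0`. -/
def prefSegDist {N d : ℕ} [NeZero d] (ρ : Matrix (Fin N → Fin d) (Fin N → Fin d) ℂ)
    (m l : ℕ) {Z : Type} [Fintype Z]
    (E : Z → Matrix (Fin (min (m * l) N) → Fin d) (Fin (min (m * l) N) → Fin d) ℂ)
    (B : Fin N → Fin d → Fin d → ℂ) (zy : Z × (Fin N → Fin d)) : ℝ :=
  if ∀ n, n ∉ seg N m l → zy.2 n = 0 then prefSegProb ρ m l E B zy.1 zy.2 else 0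

/-- Conditional Shannon entropy `H(Y|Z) = H(Z,Y) − H(Z)` of a joint distribution. -/
def condShannon {Z Y' : Type*} [Fintype Z] [Fintype Y'] (p : Z × Y' → ℝ) : ℝ :=
  shannon p - shannon (fun z => ∑ y, p (z, y))

/-- The lower bound `L_l = (1/N){∑_{n ∈ I_l} min_{Λ ∈ N_{n:l}} H_Λ(Y_{n:l}|Z_n) − S(ρ)}` for
the work deficit density. -/
def Lbound {N d : ℕ} [NeZero d] (ρ : Matrix (Fin N → Fin d) (Fin N → Fin d) ℂ)
    (l : ℕ) : ℝ :=
  (1 / (N : ℝ)) * ((∑ m ∈ Finset.range (N / l),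
    sInf {h : ℝ | ∃ (Z : Type) (_ : Fintype Z)
      (E : Z → Matrix (Fin (min (m * l) N) → Fin d) (Fin (min (m * l) N) → Fin d) ℂ)
      (B : Fin N → Fin d → Fin d → ℂ),
      IsPOVM E ∧ (∀ n, ONB (B n)) ∧
      h = condShannon (prefSegDist ρ m l E B)}) - vN ρ)

/-!
Fix local bases `B` and let `H_k` be the entropy of measuring the first `k` parties in them.
The chain rule telescopes `H_N = ∑_m (H_{(m+1)l} − H_{ml})`. Each increment is the conditional
entropy `H(Y_{ml:l} | Z_{ml})` of the protocol in `N_{ml:l}` that measures the prefix projectively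
in `B` (its outcome `Z` being the prefix outcomes), so minimising over protocols gives `L_l ≤ δ`.
Conditioning does not increase entropy, so each increment is at most `H(Y_{ml:l})`; choosing `B`
segment by segment as the optimal segment bases gives `δ ≤ U_l`. All Born probabilities are
nonnegative by the Schur product theorem, since every effect involved is an entrywise product of
positive semidefinite kernels.
-/

open Finset Matrix ComplexConjugate

section Entropy

variable {α Z Y : Type*} [Fintype α] [Fintype Z] [Fintype Y]

lemma shannon_eq_sum_negMulLog (p : α → ℝ) : shannon p = ∑ a, Real.negMulLog (p a) := by
  simp [shannon, Real.negMulLog, sum_neg_distrib]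

lemma shannon_nonneg_s11 {p : α → ℝ} (h0 : ∀ a, 0 ≤ p a) (h1 : ∀ a, p a ≤ 1) :
    0 ≤ shannon p := by
  rw [shannon_eq_sum_negMulLog]
  exact sum_nonneg fun a _ => Real.negMulLog_nonneg (h0 a) (h1 a)

lemma shannon_le_neg_sum_mul_log {p r : α → ℝ} (hp0 : ∀ a, 0 ≤ p a) (hp1 : ∑ a, p a = 1)
    (hr0 : ∀ a, 0 ≤ r a) (hr1 : ∑ a, r a ≤ 1) (hpr : ∀ a, r a = 0 → p a = 0) :
    shannon p ≤ -∑ a, p a * Real.log (r a) := by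
  have key : ∀ a, p a * Real.log (r a) - p a * Real.log (p a) ≤ r a - p a := by
    intro a
    rcases (hp0 a).eq_or_lt with hpa | hpa
    · simp [← hpa, hr0 a]
    have hra : 0 < r a := (hr0 a).lt_of_ne fun h => hpa.ne' (hpr a h.symm)
    have hlog := Real.log_le_sub_one_of_pos (div_pos hra hpa)
    rw [Real.log_div hra.ne' hpa.ne'] at hlog
    have := mul_le_mul_of_nonneg_left hlog hpa.le
    rw [mul_sub, mul_sub, mul_div_cancel₀ _ hpa.ne'] at this
    linarith
  have := sum_le_sum fun a (_ : a ∈ univ) => key a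
  rw [sum_sub_distrib, sum_sub_distrib, hp1] at this
  rw [shannon]
  linarith

lemma shannon_sum_snd_le_shannon {p : Z × Y → ℝ} (h0 : ∀ x, 0 ≤ p x) :
    shannon (fun z => ∑ y, p (z, y)) ≤ shannon p := by
  rw [shannon, shannon, neg_le_neg_iff, Fintype.sum_prod_type]
  refine sum_le_sum fun z _ => ?_
  rw [sum_mul]
  refine sum_le_sum fun y _ => ?_
  rcases (h0 (z, y)).eq_or_lt with h | h
  · simp [← h]
  · exact mul_le_mul_of_nonneg_left (Real.log_le_log h
      (single_le_sum (fun y' _ => h0 (z, y')) (mem_univ y))) h.le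

lemma condShannon_nonneg {p : Z × Y → ℝ} (h0 : ∀ x, 0 ≤ p x) : 0 ≤ condShannon p :=
  sub_nonneg.2 (shannon_sum_snd_le_shannon h0)

lemma condShannon_le_shannon_sum_fst {p : Z × Y → ℝ} (h0 : ∀ x, 0 ≤ p x)
    (h1 : ∑ x, p x = 1) : condShannon p ≤ shannon (fun y => ∑ z, p (z, y)) := by
  set pZ := fun z => ∑ y, p (z, y)
  set pY := fun y => ∑ z, p (z, y)
  have hpZ : ∀ z y, p (z, y) ≤ pZ z := fun z y =>
    single_le_sum (fun y' _ => h0 (z, y')) (mem_univ y)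
  have hpY : ∀ z y, p (z, y) ≤ pY y := fun z y =>
    single_le_sum (fun z' _ => h0 (z', y)) (mem_univ z)
  -- Gibbs' inequality against the product of the marginals
  have gibbs : shannon p ≤ -∑ x : Z × Y, p x * Real.log (pZ x.1 * pY x.2) := by
    refine shannon_le_neg_sum_mul_log h0 h1
      (fun x => mul_nonneg ((h0 _).trans (hpZ x.1 x.2)) ((h0 _).trans (hpY x.1 x.2)))
      (le_of_eq ?_) fun x hx => ?_
    · have hZ : ∑ z, pZ z = 1 := by rw [← h1, Fintype.sum_prod_type]
      have hY : ∑ y, pY y = 1 := by rw [← h1, Fintype.sum_prod_type_right]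
      rw [Fintype.sum_prod_type, ← sum_mul_sum, hZ, hY, one_mul]
    · rcases mul_eq_zero.1 hx with h | h
      · exact le_antisymm (h ▸ hpZ x.1 x.2) (h0 x)
      · exact le_antisymm (h ▸ hpY x.1 x.2) (h0 x)
  have split : ∑ x : Z × Y, p x * Real.log (pZ x.1 * pY x.2)
      = ∑ z, pZ z * Real.log (pZ z) + ∑ y, pY y * Real.log (pY y) := by
    have hterm : ∀ x : Z × Y, p x * Real.log (pZ x.1 * pY x.2)
        = p x * Real.log (pZ x.1) + p x * Real.log (pY x.2) := by
      rintro ⟨z, y⟩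
      rcases (h0 (z, y)).eq_or_lt with h | h
      · simp [← h]
      · rw [Real.log_mul (h.trans_le (hpZ z y)).ne' (h.trans_le (hpY z y)).ne', mul_add]
    simp only [hterm, sum_add_distrib]
    rw [Fintype.sum_prod_type, Fintype.sum_prod_type_right]
    simp only [← sum_mul, pZ, pY]
  rw [condShannon]
  unfold shannon at gibbs ⊢
  linarith

end Entropy

section Kernels

variable {ι α : Type*} [Fintype ι] [Fintype α]

lemma ONB.sum_mul_conj {d : ℕ} {B : Fin d → Fin d → ℂ} (hB : ONB B) (s t : Fin d) :
    ∑ a, B a s * conj (B a t) = if s = t then 1 else 0 := by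
  have hrows : Matrix.of B * (Matrix.of B)ᴴ = 1 := by
    ext a b
    simpa [Matrix.mul_apply, Matrix.one_apply, mul_comm, eq_comm] using hB b a
  have := congrFun₂ (mul_eq_one_comm.mp hrows : (Matrix.of B)ᴴ * Matrix.of B = 1) t s
  simpa [Matrix.mul_apply, Matrix.one_apply, mul_comm, eq_comm] using this

lemma ONB_one {d : ℕ} : ONB (1 : Matrix (Fin d) (Fin d) ℂ) := by
  intro a b
  simp [Matrix.one_apply]

lemma re_trace_mul_nonneg {K ρ : Matrix α α ℂ} (hK : K.PosSemidef) (hρ : ρ.PosSemidef) :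
    0 ≤ (K * ρ).trace.re := by
  -- `tr (K ρ) = 1ᴴ (K ⊙ ρᵀ) 1`, which is nonnegative by the Schur product theorem
  have := (hK.hadamard hρ.transpose).dotProduct_mulVec_nonneg 1
  have h : star 1 ⬝ᵥ (K ⊙ ρᵀ) *ᵥ 1 = (K * ρ).trace := by
    simp [dotProduct, mulVec, Matrix.trace, Matrix.mul_apply]
  rw [h] at this
  exact (Complex.nonneg_iff.mp this).1

lemma posSemidef_of_const_one : (Matrix.of fun _ _ : α => (1 : ℂ)).PosSemidef := by
  convert posSemidef_vecMulVec_self_star (1 : α → ℂ) using 1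
  ext a b
  simp [vecMulVec]

omit [Fintype α] in
lemma posSemidef_of_ite {P : Prop} [Decidable P] {X Y : α → α → ℂ}
    (hX : (Matrix.of X).PosSemidef) (hY : (Matrix.of Y).PosSemidef) :
    (Matrix.of fun a b => if P then X a b else Y a b).PosSemidef := by
  by_cases h : P
  · simpa [h] using hX
  · simpa [h] using hY

lemma posSemidef_of_prod [DecidableEq ι] (k : ι → α → α → ℂ)
    (hk : ∀ i, (Matrix.of (k i)).PosSemidef) :
    (Matrix.of fun s t : ι → α => ∏ i, k i (s i) (t i)).PosSemidef := by
  have hprod : (fun s t : ι → α => ∏ i, k i (s i) (t i)) = ∏ i, fun s t => k i (s i) (t i) := by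
    ext s t
    simp [Finset.prod_apply]
  rw [hprod]
  exact Finset.prod_induction _ (fun K => (Matrix.of K).PosSemidef)
    (fun K L hK hL => hK.hadamard hL) posSemidef_of_const_one
    fun i _ => (hk i).submatrix (fun s : ι → α => s i)

end Kernels

section PinnedSums

variable {ι α : Type*} [Fintype ι] [DecidableEq ι] [Fintype α] [DecidableEq α]

lemma sum_pinned_prod {M : Type*} [CommSemiring M]
    (T : Finset ι) (o : α) (f : ι → α → M) :
    ∑ c : ι → α, (if ∀ i, i ∉ T → c i = o then ∏ i, f i (c i) else 0)
      = ∏ i, if i ∈ T then ∑ a, f i a else f i o := by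
  have hpin : univ.filter (fun c : ι → α => ∀ i, i ∉ T → c i = o)
      = Fintype.piFinset fun i => if i ∈ T then univ else {o} := by
    ext c
    simp only [mem_filter, mem_univ, true_and, Fintype.mem_piFinset]
    refine forall_congr' fun i => ?_
    split_ifs <;> simp [*]
  rw [← sum_filter, hpin, ← prod_univ_sum]
  refine prod_congr rfl fun i _ => ?_
  split_ifs <;> simp

lemma sum_pinned_union {M : Type*} [AddCommMonoid M] {A S : Finset ι} (hAS : Disjoint A S)
    (o : α) (F : (ι → α) → M) :
    ∑ a : ι → α, ∑ b : ι → α, (if (∀ n, n ∉ A → a n = o) ∧ (∀ n, n ∉ S → b n = o)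
      then F (fun n => if n ∈ A then a n else b n) else 0)
      = ∑ c : ι → α, if ∀ n, n ∉ A ∪ S → c n = o then F c else 0 := by
  rw [← Fintype.sum_prod_type', ← sum_filter, ← sum_filter]
  refine sum_nbij' (fun ab n => if n ∈ A then ab.1 n else ab.2 n)
    (fun c => (fun n => if n ∈ A then c n else o, fun n => if n ∈ S then c n else o))
    ?_ ?_ ?_ ?_ fun _ _ => rfl
  · simp only [mem_filter, mem_univ, true_and, mem_union, not_or, and_imp]
    intro ab _ hb n hnA hnS
    simp [hnA, hb n hnS]
  · simp only [mem_filter, mem_univ, true_and]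
    exact fun c _ => ⟨fun n hn => if_neg hn, fun n hn => if_neg hn⟩
  · simp only [mem_filter, mem_univ, true_and]
    rintro ⟨a, b⟩ ⟨ha, hb⟩
    ext n
    · by_cases hn : n ∈ A
      · simp [hn]
      · simp [hn, (ha n hn).symm]
    · by_cases hn : n ∈ S
      · simp [hn, Finset.disjoint_right.1 hAS hn]
      · simp [hn, (hb n hn).symm]
  · simp only [mem_filter, mem_univ, true_and, mem_union, not_or, and_imp]
    intro c hc
    ext n
    by_cases hnA : n ∈ A
    · simp [hnA]
    · by_cases hnS : n ∈ S
      · simp [hnA, hnS]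
      · simp [hnA, hnS, hc n hnA hnS]

end PinnedSums

section Measurement

variable {ι : Type*} [Fintype ι] [DecidableEq ι] {d : ℕ}

/-- The effect `⊗_{n ∈ A} |B n (y n)⟩⟨B n (y n)| ⊗ 1` of obtaining outcome `y` when the parties
in `A` are measured in the bases `B n`. -/
def measKernel (A : Finset ι) (B : ι → Fin d → Fin d → ℂ) (y : ι → Fin d) :
    Matrix (ι → Fin d) (ι → Fin d) ℂ :=
  Matrix.of fun s t => ∏ n, if n ∈ A then B n (y n) (s n) * conj (B n (y n) (t n))
    else if s n = t n then 1 else 0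

lemma measKernel_posSemidef (A : Finset ι) (B : ι → Fin d → Fin d → ℂ) (y : ι → Fin d) :
    (measKernel A B y).PosSemidef :=
  posSemidef_of_prod (fun n a b => if n ∈ A then B n (y n) a * conj (B n (y n) b)
    else if a = b then 1 else 0)
    fun _ => posSemidef_of_ite (posSemidef_vecMulVec_self_star _) PosSemidef.one

lemma measKernel_congr {A : Finset ι} {B B' : ι → Fin d → Fin d → ℂ} {y y' : ι → Fin d}
    (hB : ∀ n ∈ A, B n = B' n) (hy : ∀ n ∈ A, y n = y' n) :
    measKernel A B y = measKernel A B' y' := by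
  ext s t
  refine prod_congr rfl fun n _ => ?_
  by_cases hn : n ∈ A
  · simp [hn, hB n hn, hy n hn]
  · simp [hn]

lemma measKernel_empty (B : ι → Fin d → Fin d → ℂ) (y : ι → Fin d) :
    measKernel ∅ B y = 1 := by
  ext s t
  simp [measKernel, prod_boole, Matrix.one_apply, funext_iff]

variable [NeZero d]

/-- Summing the outcomes of the parties in `T ⊆ A` undoes their measurement, by completeness of
the bases. -/
lemma sum_measKernel_pinned {B : ι → Fin d → Fin d → ℂ} (hB : ∀ n, ONB (B n))
    {A T : Finset ι} (hT : T ⊆ A) (y : ι → Fin d) :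
    ∑ c : ι → Fin d, (if ∀ n, n ∉ T → c n = 0
      then measKernel A B (fun n => if n ∈ T then c n else y n) else 0)
      = measKernel (A \ T) B y := by
  ext s t
  rw [Matrix.sum_apply]
  simp only [apply_ite (fun K : Matrix (ι → Fin d) (ι → Fin d) ℂ => K s t), Matrix.zero_apply,
    measKernel, Matrix.of_apply]
  rw [sum_pinned_prod T 0 fun n a => if n ∈ A then B n (if n ∈ T then a else y n) (s n) *
      conj (B n (if n ∈ T then a else y n) (t n)) else if s n = t n then 1 else 0]
  refine prod_congr rfl fun n _ => ?_
  by_cases hnT : n ∈ T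
  · simp [hnT, hT hnT, (hB n).sum_mul_conj]
  · simp [hnT]

end Measurement

section Born

variable {N d : ℕ} {ρ : Matrix (Fin N → Fin d) (Fin N → Fin d) ℂ}
  {B : Fin N → Fin d → Fin d → ℂ}

lemma segProb_eq_re_trace (ρ : Matrix (Fin N → Fin d) (Fin N → Fin d) ℂ) (A : Finset (Fin N))
    (B : Fin N → Fin d → Fin d → ℂ) (y : Fin N → Fin d) :
    segProb ρ A B y = (measKernel A B y * ρ).trace.re :=
  rfl

lemma segProb_nonneg (hρ : ρ.PosSemidef) (A : Finset (Fin N)) (B : Fin N → Fin d → Fin d → ℂ)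
    (y : Fin N → Fin d) : 0 ≤ segProb ρ A B y :=
  re_trace_mul_nonneg (measKernel_posSemidef A B y) hρ

lemma segProb_congr {A : Finset (Fin N)} {B' : Fin N → Fin d → Fin d → ℂ}
    {y y' : Fin N → Fin d} (hB : ∀ n ∈ A, B n = B' n) (hy : ∀ n ∈ A, y n = y' n) :
    segProb ρ A B y = segProb ρ A B' y' := by
  rw [segProb_eq_re_trace, segProb_eq_re_trace, measKernel_congr hB hy]

lemma segProb_empty (hρ : IsDensity ρ) (B : Fin N → Fin d → Fin d → ℂ) (y : Fin N → Fin d) :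
    segProb ρ ∅ B y = 1 := by
  rw [segProb_eq_re_trace, measKernel_empty, one_mul, hρ.2, Complex.one_re]

lemma prefSegProb_nonneg (hρ : ρ.PosSemidef) (m l : ℕ) {Z : Type} [Fintype Z]
    {E : Z → Matrix (Fin (min (m * l) N) → Fin d) (Fin (min (m * l) N) → Fin d) ℂ}
    (hE : ∀ z, (E z).PosSemidef) (B : Fin N → Fin d → Fin d → ℂ) (z : Z)
    (y : Fin N → Fin d) : 0 ≤ prefSegProb ρ m l E B z y := by
  -- the effect is the entrywise product of `E z` on the prefix with a product kernel
  have hker := posSemidef_of_prod (fun n a b => if n ∈ seg N m l then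
      B n (y n) a * conj (B n (y n) b) else if n.val < m * l then 1 else if a = b then 1 else 0)
    fun _ => posSemidef_of_ite (posSemidef_vecMulVec_self_star _)
      (posSemidef_of_ite posSemidef_of_const_one PosSemidef.one)
  exact re_trace_mul_nonneg (((hE z).submatrix _).hadamard hker) hρ

variable [NeZero d]

lemma segDist_univ (ρ : Matrix (Fin N → Fin d) (Fin N → Fin d) ℂ)
    (B : Fin N → Fin d → Fin d → ℂ) : segDist ρ univ B = locProb ρ B := by
  ext y
  simp [segDist, segProb, locProb]

lemma sum_segProb_pinned (hB : ∀ n, ONB (B n)) {A T : Finset (Fin N)} (hT : T ⊆ A)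
    (y : Fin N → Fin d) :
    ∑ c : Fin N → Fin d, (if ∀ n, n ∉ T → c n = 0
      then segProb ρ A B (fun n => if n ∈ T then c n else y n) else 0)
      = segProb ρ (A \ T) B y := by
  rw [segProb_eq_re_trace, ← sum_measKernel_pinned hB hT y, sum_mul, trace_sum, Complex.re_sum]
  refine sum_congr rfl fun c _ => ?_
  split_ifs <;> simp [segProb_eq_re_trace]

lemma segDist_congr {A : Finset (Fin N)} {B' : Fin N → Fin d → Fin d → ℂ}
    (hB : ∀ n ∈ A, B n = B' n) : segDist ρ A B = segDist ρ A B' := by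
  ext y
  unfold segDist
  rw [segProb_congr hB fun _ _ => rfl]

lemma segDist_nonneg (hρ : IsDensity ρ) (A : Finset (Fin N)) (B : Fin N → Fin d → Fin d → ℂ)
    (y : Fin N → Fin d) : 0 ≤ segDist ρ A B y := by
  unfold segDist
  split_ifs
  exacts [segProb_nonneg hρ.1 A B y, le_rfl]

lemma sum_segDist (hρ : IsDensity ρ) (hB : ∀ n, ONB (B n)) (A : Finset (Fin N)) :
    ∑ y, segDist ρ A B y = 1 := by
  have hpin : ∀ y : Fin N → Fin d, segDist ρ A B y = if ∀ n, n ∉ A → y n = 0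
      then segProb ρ A B (fun n => if n ∈ A then y n else 0) else 0 := fun y => by
    unfold segDist
    split_ifs
    exacts [segProb_congr (fun _ _ => rfl) fun n hn => (if_pos hn).symm, rfl]
  simp only [hpin]
  rw [sum_segProb_pinned hB subset_rfl, sdiff_self, bot_eq_empty, segProb_empty hρ]

lemma segDist_le_one (hρ : IsDensity ρ) (hB : ∀ n, ONB (B n)) (A : Finset (Fin N))
    (y : Fin N → Fin d) : segDist ρ A B y ≤ 1 :=
  sum_segDist hρ hB A ▸ single_le_sum (fun y' _ => segDist_nonneg hρ A B y') (mem_univ y)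

lemma shannon_segDist_empty (hρ : IsDensity ρ) (B : Fin N → Fin d → Fin d → ℂ) :
    shannon (segDist ρ ∅ B) = 0 := by
  rw [shannon, neg_eq_zero]
  refine sum_eq_zero fun y _ => ?_
  unfold segDist
  split_ifs <;> simp [segProb_empty hρ]

lemma prefSegDist_nonneg (hρ : IsDensity ρ) {m l : ℕ} {Z : Type} [Fintype Z]
    {E : Z → Matrix (Fin (min (m * l) N) → Fin d) (Fin (min (m * l) N) → Fin d) ℂ}
    (hE : IsPOVM E) (B : Fin N → Fin d → Fin d → ℂ) (zy : Z × (Fin N → Fin d)) :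
    0 ≤ prefSegDist ρ m l E B zy := by
  unfold prefSegDist
  split_ifs
  exacts [prefSegProb_nonneg hρ.1 m l hE.1 B zy.1 zy.2, le_rfl]

end Born

section Segments

def firstParties (N k : ℕ) : Finset (Fin N) := univ.filter fun n => n.val < k

variable {N : ℕ} (m l : ℕ)

lemma mem_firstParties {k : ℕ} {n : Fin N} : n ∈ firstParties N k ↔ n.val < k := by
  simp [firstParties]

lemma mem_seg {n : Fin N} : n ∈ seg N m l ↔ m * l ≤ n.val ∧ n.val < m * l + l := by
  simp [seg]

lemma firstParties_zero : firstParties N 0 = ∅ := by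
  ext n
  simp [mem_firstParties]

lemma firstParties_self : firstParties N N = univ := by
  ext n
  simp [mem_firstParties, n.isLt]

lemma disjoint_firstParties_seg : Disjoint (firstParties N (m * l)) (seg N m l) := by
  rw [Finset.disjoint_left]
  intro n
  simp only [mem_firstParties, mem_seg]
  omega

lemma firstParties_union_seg :
    firstParties N (m * l) ∪ seg N m l = firstParties N ((m + 1) * l) := by
  ext n
  simp only [mem_union, mem_firstParties, mem_seg, add_one_mul]
  omega

lemma firstParties_sdiff_seg :
    firstParties N ((m + 1) * l) \ seg N m l = firstParties N (m * l) := by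
  rw [← firstParties_union_seg, union_sdiff_cancel_right (disjoint_firstParties_seg m l)]

lemma firstParties_sdiff_firstParties :
    firstParties N ((m + 1) * l) \ firstParties N (m * l) = seg N m l := by
  rw [← firstParties_union_seg, union_sdiff_cancel_left (disjoint_firstParties_seg m l)]

end Segments

section PrefixMeasurement

variable {N d : ℕ} [NeZero d]

def padZero (k : ℕ) (u : Fin k → Fin d) : Fin N → Fin d :=
  fun n => if h : n.val < k then u ⟨n.val, h⟩ else 0

lemma padZero_injective {k : ℕ} (hk : k ≤ N) :
    Function.Injective (padZero (N := N) (d := d) k) := by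
  intro u v huv
  funext i
  simpa [padZero] using congrFun huv (Fin.castLE hk i)

lemma padZero_restrict {k : ℕ} (hk : k ≤ N) (s : Fin N → Fin d) (n : Fin N) :
    padZero k (fun i => s (Fin.castLE hk i)) n = if n.val < k then s n else 0 := by
  unfold padZero
  split_ifs <;> rfl

/-- The local projective measurement of the first `m * l` parties, viewed as a POVM on them,
with outcomes recorded as functions pinned to `0` on the other parties. -/
def prefixPOVM (B : Fin N → Fin d → Fin d → ℂ) (m l : ℕ) (c : Fin N → Fin d) :
    Matrix (Fin (min (m * l) N) → Fin d) (Fin (min (m * l) N) → Fin d) ℂ :=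
  if ∀ n, n ∉ firstParties N (m * l) → c n = 0 then
    (measKernel (firstParties N (m * l)) B c).submatrix (padZero _) (padZero _)
  else 0

variable {B : Fin N → Fin d → Fin d → ℂ}

lemma isPOVM_prefixPOVM (hB : ∀ n, ONB (B n)) (m l : ℕ) : IsPOVM (prefixPOVM B m l) := by
  constructor
  · intro c
    unfold prefixPOVM
    split_ifs
    exacts [(measKernel_posSemidef _ B c).submatrix _, PosSemidef.zero]
  · have hsum := sum_measKernel_pinned hB (subset_refl (firstParties N (m * l))) 0
    rw [sdiff_self, bot_eq_empty, measKernel_empty] at hsum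
    ext u v
    have := congrFun₂ hsum (padZero _ u) (padZero _ v)
    simp only [Matrix.sum_apply, Matrix.one_apply,
      (padZero_injective (min_le_right _ _)).eq_iff] at this ⊢
    rw [← this]
    refine sum_congr rfl fun c _ => ?_
    unfold prefixPOVM
    split_ifs
    · simp only [submatrix_apply]
      rw [measKernel_congr (fun _ _ => rfl) fun n hn => if_pos hn]
    · rfl

lemma prefSegProb_prefixPOVM (ρ : Matrix (Fin N → Fin d) (Fin N → Fin d) ℂ) (m l : ℕ)
    {c : Fin N → Fin d} (hc : ∀ n, n ∉ firstParties N (m * l) → c n = 0) (y : Fin N → Fin d) :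
    prefSegProb ρ m l (prefixPOVM B m l) B c y = segProb ρ (firstParties N ((m + 1) * l)) B
      (fun n => if n ∈ firstParties N (m * l) then c n else y n) := by
  simp only [prefSegProb, segProb, prefixPOVM, if_pos hc, submatrix_apply, padZero_restrict,
    measKernel, Matrix.of_apply, ← prod_mul_distrib]
  congr 1
  refine sum_congr rfl fun s _ => sum_congr rfl fun t _ => ?_
  congr 1
  refine prod_congr rfl fun n _ => ?_
  have hmin : n.val < min (m * l) N ↔ n.val < m * l := by simp [n.isLt]
  have hQ' : n.val < (m + 1) * l ↔ n.val < m * l ∨ n ∈ seg N m l := by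
    rw [mem_seg, add_one_mul]
    omega
  by_cases hQ : n.val < m * l
  · have hseg : n ∉ seg N m l := by
      rw [mem_seg]
      omega
    simp [hQ, hseg, hQ', hmin, mem_firstParties]
  · by_cases hseg : n ∈ seg N m l <;> simp [hQ, hseg, hQ', hmin, mem_firstParties]

end PrefixMeasurement

section Chain

variable {N d : ℕ} [NeZero d] {ρ : Matrix (Fin N → Fin d) (Fin N → Fin d) ℂ}
  {B : Fin N → Fin d → Fin d → ℂ} (m l : ℕ)

lemma prefSegDist_prefixPOVM (c y : Fin N → Fin d) :
    prefSegDist ρ m l (prefixPOVM B m l) B (c, y) =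
      if (∀ n, n ∉ firstParties N (m * l) → c n = 0) ∧ (∀ n, n ∉ seg N m l → y n = 0) then
        segProb ρ (firstParties N ((m + 1) * l)) B
          (fun n => if n ∈ firstParties N (m * l) then c n else y n)
      else 0 := by
  unfold prefSegDist
  by_cases hc : ∀ n, n ∉ firstParties N (m * l) → c n = 0
  · simp only [eq_true hc, true_and]
    split_ifs
    exacts [prefSegProb_prefixPOVM ρ m l hc y, rfl]
  · have hE : prefixPOVM B m l c = 0 := if_neg hc
    simp [hc, prefSegProb, hE]

lemma shannon_prefSegDist_prefixPOVM :
    shannon (prefSegDist ρ m l (prefixPOVM B m l) B)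
      = shannon (segDist ρ (firstParties N ((m + 1) * l)) B) := by
  simp only [shannon_eq_sum_negMulLog, Fintype.sum_prod_type, prefSegDist_prefixPOVM, segDist,
    apply_ite Real.negMulLog, Real.negMulLog_zero]
  have h := sum_pinned_union (disjoint_firstParties_seg (N := N) m l) (0 : Fin d)
    fun c => Real.negMulLog (segProb ρ (firstParties N ((m + 1) * l)) B c)
  rw [firstParties_union_seg] at h
  -- only the `Decidable` instances differ: the definitions decide `∀ n : Fin N, _` by
  -- `Nat.decidableForallFin`, the general lemma by `Fintype.decidableForallFintype`
  convert h

variable (hB : ∀ n, ONB (B n))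
include hB

lemma sum_snd_prefSegDist_prefixPOVM :
    (fun c => ∑ y, prefSegDist ρ m l (prefixPOVM B m l) B (c, y))
      = segDist ρ (firstParties N (m * l)) B := by
  ext c
  simp only [prefSegDist_prefixPOVM, segDist]
  by_cases hc : ∀ n, n ∉ firstParties N (m * l) → c n = 0
  · have hseg : seg N m l ⊆ firstParties N ((m + 1) * l) :=
      firstParties_union_seg m l ▸ subset_union_right
    simp only [eq_true hc, true_and, if_true]
    have hmarg := sum_segProb_pinned (ρ := ρ) hB hseg c
    rw [firstParties_sdiff_seg] at hmarg
    rw [← hmarg]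
    refine sum_congr rfl fun y _ => ?_
    split_ifs
    · refine segProb_congr (fun _ _ => rfl) fun n hn => ?_
      by_cases hnQ : n ∈ firstParties N (m * l)
      · simp [hnQ, Finset.disjoint_left.1 (disjoint_firstParties_seg m l) hnQ]
      · have hnseg : n ∈ seg N m l := by
          rw [← firstParties_union_seg] at hn
          simpa [hnQ] using hn
        simp [hnQ, hnseg]
    · rfl
  · simp [hc]

lemma sum_fst_prefSegDist_prefixPOVM :
    (fun y => ∑ c, prefSegDist ρ m l (prefixPOVM B m l) B (c, y)) = segDist ρ (seg N m l) B := by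
  ext y
  simp only [prefSegDist_prefixPOVM, segDist]
  by_cases hy : ∀ n, n ∉ seg N m l → y n = 0
  · have hQ : firstParties N (m * l) ⊆ firstParties N ((m + 1) * l) :=
      firstParties_union_seg m l ▸ subset_union_left
    simp only [eq_true hy, and_true, if_true]
    have hmarg := sum_segProb_pinned (ρ := ρ) hB hQ y
    rw [firstParties_sdiff_firstParties] at hmarg
    exact hmarg
  · simp [hy]

lemma condShannon_prefSegDist_prefixPOVM :
    condShannon (prefSegDist ρ m l (prefixPOVM B m l) B)
      = shannon (segDist ρ (firstParties N ((m + 1) * l)) B)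
        - shannon (segDist ρ (firstParties N (m * l)) B) := by
  rw [condShannon, shannon_prefSegDist_prefixPOVM, sum_snd_prefSegDist_prefixPOVM m l hB]

lemma condShannon_prefSegDist_prefixPOVM_le (hρ : IsDensity ρ) :
    condShannon (prefSegDist ρ m l (prefixPOVM B m l) B) ≤ shannon (segDist ρ (seg N m l) B) := by
  rw [← sum_fst_prefSegDist_prefixPOVM m l hB]
  refine condShannon_le_shannon_sum_fst (prefSegDist_nonneg hρ (isPOVM_prefixPOVM hB m l) B) ?_
  rw [Fintype.sum_prod_type_right, ← sum_segDist hρ hB (seg N m l),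
    ← sum_fst_prefSegDist_prefixPOVM m l hB]

end Chain

lemma sum_condShannon_prefSegDist_prefixPOVM {N d : ℕ} [NeZero d]
    {ρ : Matrix (Fin N → Fin d) (Fin N → Fin d) ℂ} (hρ : IsDensity ρ)
    {B : Fin N → Fin d → Fin d → ℂ} (hB : ∀ n, ONB (B n)) {M l : ℕ} (hMl : M * l = N) :
    ∑ m ∈ range M, condShannon (prefSegDist ρ m l (prefixPOVM B m l) B)
      = shannon (locProb ρ B) := by
  simp only [condShannon_prefSegDist_prefixPOVM _ _ hB]
  rw [sum_range_sub (fun k => shannon (segDist ρ (firstParties N (k * l)) B)), hMl, zero_mul,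
    firstParties_self, firstParties_zero, segDist_univ, shannon_segDist_empty hρ, sub_zero]

lemma csInf_le_sum_csInf {ι : Type*} (s : Finset ι) {T : Set ℝ} {S : ι → Set ℝ}
    (hT : BddBelow T) (hS : ∀ i, (S i).Nonempty)
    (h : ∀ x : ι → ℝ, (∀ i, x i ∈ S i) → ∃ t ∈ T, t ≤ ∑ i ∈ s, x i) :
    sInf T ≤ ∑ i ∈ s, sInf (S i) := by
  refine le_of_forall_pos_le_add fun ε hε => ?_
  have hδ : 0 < ε / (#s + 1) := by positivity
  choose x hxS hx using fun i => Real.lt_sInf_add_pos (hS i) hδ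
  obtain ⟨t, ht, hts⟩ := h x hxS
  have hsmall : #s * (ε / (#s + 1)) ≤ ε := by
    rw [← mul_div_assoc, div_le_iff₀ (by positivity)]
    nlinarith
  calc sInf T ≤ t := csInf_le hT ht
    _ ≤ ∑ i ∈ s, x i := hts
    _ ≤ ∑ i ∈ s, (sInf (S i) + ε / (#s + 1)) := sum_le_sum fun i _ => (hx i).le
    _ ≤ ∑ i ∈ s, sInf (S i) + ε := by
      rw [sum_add_distrib, sum_const, nsmul_eq_mul]
      linarith

section Bounds

variable {N d : ℕ}

/-- `min_{Λ ∈ M_N} H_Λ(Y_N)`. -/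
def minMeasEntropy (ρ : Matrix (Fin N → Fin d) (Fin N → Fin d) ℂ) : ℝ :=
  sInf {h : ℝ | ∃ B : Fin N → Fin d → Fin d → ℂ,
    (∀ n, ONB (B n)) ∧ h = shannon (locProb ρ B)}

variable [NeZero d]

/-- `min_{Λ ∈ M_{n:l}} H_Λ(Y_{n:l})` for `n = m * l`. -/
def minSegEntropy (ρ : Matrix (Fin N → Fin d) (Fin N → Fin d) ℂ) (m l : ℕ) : ℝ :=
  sInf {h : ℝ | ∃ B : Fin N → Fin d → Fin d → ℂ,
    (∀ n, ONB (B n)) ∧ h = shannon (segDist ρ (seg N m l) B)}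

/-- `min_{Λ ∈ N_{n:l}} H_Λ(Y_{n:l}|Z_n)` for `n = m * l`. -/
def minCondEntropy (ρ : Matrix (Fin N → Fin d) (Fin N → Fin d) ℂ) (m l : ℕ) : ℝ :=
  sInf {h : ℝ | ∃ (Z : Type) (_ : Fintype Z)
    (E : Z → Matrix (Fin (min (m * l) N) → Fin d) (Fin (min (m * l) N) → Fin d) ℂ)
    (B : Fin N → Fin d → Fin d → ℂ),
    IsPOVM E ∧ (∀ n, ONB (B n)) ∧ h = condShannon (prefSegDist ρ m l E B)}

variable {ρ : Matrix (Fin N → Fin d) (Fin N → Fin d) ℂ}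

/-- A combination of optimal segment measurements is a measurement of the whole chain, and by
subadditivity its entropy is at most the sum of the segment entropies. -/
lemma minMeasEntropy_le_sum_minSegEntropy (hρ : IsDensity ρ) {M l : ℕ} (hMl : M * l = N) :
    minMeasEntropy ρ ≤ ∑ m ∈ range M, minSegEntropy ρ m l := by
  refine csInf_le_sum_csInf _ ⟨0, ?_⟩
    (fun m => ⟨_, fun _ => (1 : Matrix (Fin d) (Fin d) ℂ), fun _ => ONB_one, rfl⟩) ?_
  · rintro _ ⟨B, hB, rfl⟩
    exact shannon_nonneg_s11 (segDist_univ ρ B ▸ segDist_nonneg hρ univ B)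
      (segDist_univ ρ B ▸ segDist_le_one hρ hB univ)
  intro x hx
  choose B hB hxB using hx
  set Bc : Fin N → Fin d → Fin d → ℂ := fun n => B (n.val / l) n
  have hBc : ∀ n, ONB (Bc n) := fun n => hB _ n
  refine ⟨_, ⟨Bc, hBc, rfl⟩, ?_⟩
  rw [← sum_condShannon_prefSegDist_prefixPOVM hρ hBc hMl]
  refine sum_le_sum fun m _ => (condShannon_prefSegDist_prefixPOVM_le m l hBc hρ).trans_eq ?_
  rw [hxB m]
  refine congrArg shannon (segDist_congr fun n hn => ?_)
  rw [mem_seg] at hn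
  simp only [Bc, Nat.div_eq_of_lt_le hn.1 (by rw [add_one_mul]; exact hn.2)]

lemma sum_minCondEntropy_le_minMeasEntropy (hρ : IsDensity ρ) {M l : ℕ} (hMl : M * l = N) :
    ∑ m ∈ range M, minCondEntropy ρ m l ≤ minMeasEntropy ρ := by
  refine le_csInf ⟨_, fun _ => (1 : Matrix (Fin d) (Fin d) ℂ), fun _ => ONB_one, rfl⟩ ?_
  rintro _ ⟨B, hB, rfl⟩
  rw [← sum_condShannon_prefSegDist_prefixPOVM hρ hB hMl]
  refine sum_le_sum fun m _ => csInf_le ⟨0, ?_⟩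
    ⟨_, inferInstance, prefixPOVM B m l, B, isPOVM_prefixPOVM hB m l, hB, rfl⟩
  rintro _ ⟨Z, _, E, B', hE, -, rfl⟩
  exact condShannon_nonneg (prefSegDist_nonneg hρ hE B')

end Bounds

theorem Lbound_le_deficitDensity_le_Ubound_general {N d : ℕ} [NeZero d]
    (ρ : Matrix (Fin N → Fin d) (Fin N → Fin d) ℂ) (hρ : IsDensity ρ)
    (l : ℕ) (hdvd : l ∣ N) :
    Lbound ρ l ≤ deficit ρ / N ∧ deficit ρ / N ≤ Ubound ρ l := by
  have hMl : N / l * l = N := Nat.div_mul_cancel hdvd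
  have hN : (0 : ℝ) ≤ 1 / N := by positivity
  rw [← one_div_mul_eq_div]
  exact ⟨mul_le_mul_of_nonneg_left
      (sub_le_sub_right (sum_minCondEntropy_le_minMeasEntropy hρ hMl) _) hN,
    mul_le_mul_of_nonneg_left
      (sub_le_sub_right (minMeasEntropy_le_sum_minSegEntropy hρ hMl) _) hN⟩

/-- The work deficit density `δ = Δ/N` is sandwiched between the efficiently computable
bounds: `L_l ≤ δ ≤ U_l` for every segment length `l` dividing `N`. -/
theorem Lbound_le_deficitDensity_le_Ubound {N d : ℕ} [NeZero d]
    (ρ : Matrix (Fin N → Fin d) (Fin N → Fin d) ℂ) (hρ : IsDensity ρ)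
    (l : ℕ) (hl : 0 < l) (hdvd : l ∣ N) :
    Lbound ρ l ≤ deficit ρ / N ∧ deficit ρ / N ≤ Ubound ρ l :=
  Lbound_le_deficitDensity_le_Ubound_general ρ hρ l hdvd
end
end
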